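/- arXiv:1710.04763 — 4 statements merged into one kernel-verified Lean document; each statement's English description precedes it below -/
import Mathlib

section
/- Let p, x ∈ ℝ³ with |p - x| > r > 0 and let 0 ≤ φ ≤ arcsin(r/|p-x|). Define R₋(φ) = |p-x| cos φ - √(r² - |p-x|² sin² φ) and d = |p-x| - r. Then R₋(φ) - d ≤ |p-x|² sin² φ / r. -/
open Real

/-! With `a = ‖p - x‖ sin φ`, the quantity `R₋(φ) - d` splits as
`‖p - x‖ (cos φ - 1) + (r - √(r² - a²))`. The first term is nonpositive, and the second equals
`a² / (r + √(r² - a²)) ≤ a² / r`. -/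

lemma Real.div_le_sqrt_of_le_sq {r y : ℝ} (hr : 0 < r) (hy : y ≤ r ^ 2) : y / r ≤ √y := by
  rw [div_le_iff₀ hr]
  rcases lt_or_ge y 0 with hneg | hnonneg
  · nlinarith [Real.sqrt_nonneg y]
  · calc y = √y * √y := (Real.mul_self_sqrt hnonneg).symm
      _ ≤ √y * r := by gcongr; exact Real.sqrt_le_iff.mpr ⟨hr.le, hy⟩

lemma Real.sub_sqrt_sq_sub_sq_le {r : ℝ} (hr : 0 < r) (a : ℝ) : r - √(r ^ 2 - a ^ 2) ≤ a ^ 2 / r := by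
  have h := Real.div_le_sqrt_of_le_sq hr (sub_le_self (r ^ 2) (sq_nonneg a))
  calc r - √(r ^ 2 - a ^ 2) ≤ r - (r ^ 2 - a ^ 2) / r := by linarith
    _ = a ^ 2 / r := by field_simp; ring

theorem Rminus_minus_dist_bound_general
    (p x : EuclideanSpace ℝ (Fin 3)) (r φ : ℝ) (hr : 0 < r) :
    (‖p - x‖ * Real.cos φ - Real.sqrt (r ^ 2 - ‖p - x‖ ^ 2 * Real.sin φ ^ 2))
      - (‖p - x‖ - r) ≤ ‖p - x‖ ^ 2 * Real.sin φ ^ 2 / r := by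
  set ℓ := ‖p - x‖
  have hcos : ℓ * (cos φ - 1) ≤ 0 :=
    mul_nonpos_of_nonneg_of_nonpos (norm_nonneg _) (sub_nonpos.mpr (cos_le_one φ))
  have hsqrt := Real.sub_sqrt_sq_sub_sq_le hr (ℓ * sin φ)
  rw [mul_pow] at hsqrt
  linarith

/-- with `ℓ = |p - x| > r > 0`, `0 ≤ φ ≤ arcsin(r/ℓ)`,
`R₋(φ) = ℓ cos φ - √(r² - ℓ² sin² φ)` and `d = ℓ - r`, one has
`R₋(φ) - d ≤ ℓ² sin² φ / r`. -/
theorem Rminus_minus_dist_bound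
    (p x : EuclideanSpace ℝ (Fin 3)) (r φ : ℝ) (hr : 0 < r) (h : r < ‖p - x‖)
    (hφ0 : 0 ≤ φ) (hφ1 : φ ≤ Real.arcsin (r / ‖p - x‖)) :
    (‖p - x‖ * Real.cos φ - Real.sqrt (r ^ 2 - ‖p - x‖ ^ 2 * Real.sin φ ^ 2))
      - (‖p - x‖ - r) ≤ ‖p - x‖ ^ 2 * Real.sin φ ^ 2 / r :=
  Rminus_minus_dist_bound_general p x r φ hr
end

section
/- Let D ⊂ ℝ³ be open with B(p,r) ⊂ ℝ³ \ closure(D), let Γ be a compact subset of ∂D disjoint from the closed ball B̄(p,r), and let v(x) = (1/(4π)) ∫_{B(p,r)} e^{-τ|x-y|}/|x-y| dy. Then there exist constants C₀ > 0 and τ₀ > 0 such that for all τ ≥ τ₀ and all x ∈ Γ, τ² e^{τ d_e(x,B)} v(x) ≥ C₀, where d_e(x,B) = |x - p| - r. -/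
open MeasureTheory Real

/-! For `x` outside the ball put `s = ‖x - p‖` and `d = s - r`. On the lens
`B(p, r) ∩ B̄(x, d + 1/τ)` the kernel `e^{-τ‖x-y‖}/‖x-y‖` is at least `e^{-τd-1}/s`. The lens
contains a box of thickness `≍ d/(τ s)` and cross-section `≍ r d/(τ s)` sitting under the point
of the sphere nearest to `x`, so its volume is `≳ r d²/(τ s)²` and `τ² e^{τd} v(x) ≳ r d²/s³`.
By compactness `d` is bounded below and `s` above on `Γ`. -/

open Metric Set

theorem exists_orthonormalBasis_apply_zero_eq {E : Type*} [NormedAddCommGroup E]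
    [InnerProductSpace ℝ E] [FiniteDimensional ℝ E] {n : ℕ} [NeZero n]
    (hn : Module.finrank ℝ E = n) {u : E} (hu : ‖u‖ = 1) :
    ∃ b : OrthonormalBasis (Fin n) ℝ E, b 0 = u := by
  have horth : Orthonormal ℝ (({0} : Set (Fin n)).domRestrict fun _ => u) :=
    ⟨fun _ => hu, fun i j hij => absurd (Subsingleton.elim i j) hij⟩
  obtain ⟨b, hb⟩ := horth.exists_orthonormalBasis_extension_of_card_eq (by simpa using hn)
  exact ⟨b, hb 0 rfl⟩

/-- The sphere of radius `r` drops by about `ρ²/(2r)` at lateral distance `ρ`, so half-width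
`√(r h)/2` is what lets a box of thickness `h/2` fit under the pole `r e₀`. -/
def capBox (r h : ℝ) : Set (EuclideanSpace ℝ (Fin 3)) :=
  {c | c 0 ∈ Ioo (r - h) (r - h / 2) ∧ |c 1| < √(r * h) / 2 ∧ |c 2| < √(r * h) / 2}

theorem capBox_eq_preimage_pi (r h : ℝ) :
    capBox r h = (MeasurableEquiv.toLp 2 (Fin 3 → ℝ)).symm ⁻¹'
      univ.pi ![Ioo (r - h) (r - h / 2), Ioo (-(√(r * h) / 2)) (√(r * h) / 2),
        Ioo (-(√(r * h) / 2)) (√(r * h) / 2)] := by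
  ext c
  simp [capBox, Fin.forall_fin_succ, abs_lt]

theorem measurableSet_capBox (r h : ℝ) : MeasurableSet (capBox r h) := by
  rw [capBox_eq_preimage_pi]
  exact (MeasurableEquiv.measurable _)
    (.univ_pi fun i => by fin_cases i <;> exact measurableSet_Ioo)

theorem volume_capBox {r h : ℝ} (hr : 0 ≤ r) (hh : 0 ≤ h) :
    volume (capBox r h) = ENNReal.ofReal (r * h ^ 2 / 2) := by
  rw [capBox_eq_preimage_pi,
    (EuclideanSpace.volume_preserving_symm_measurableEquiv_toLp _).measure_preimage
      (MeasurableSet.univ_pi fun i => by fin_cases i <;> exact measurableSet_Ioo).nullMeasurableSet,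
    volume_pi_pi, Fin.prod_univ_three]
  simp only [Matrix.cons_val_zero, Matrix.cons_val_one, Matrix.cons_val_two, Matrix.tail_cons,
    Matrix.head_cons, Real.volume_Ioo]
  rw [← ENNReal.ofReal_mul (by linarith), ← ENNReal.ofReal_mul (by nlinarith [sqrt_nonneg (r * h)])]
  congr 1
  have := Real.sq_sqrt (mul_nonneg hr hh)
  linear_combination h / 2 * this

theorem sq_add_sq_lt_of_mem_capBox {r h : ℝ} (hrh : 0 ≤ r * h) {c : EuclideanSpace ℝ (Fin 3)}
    (hc : c ∈ capBox r h) : c 1 ^ 2 + c 2 ^ 2 < r * h / 2 := by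
  have hsq : ∀ a : ℝ, |a| < √(r * h) / 2 → a ^ 2 < r * h / 4 := fun a ha => by
    have := pow_lt_pow_left₀ ha (abs_nonneg a) two_ne_zero
    rw [sq_abs, div_pow, sq_sqrt hrh] at this
    linarith
  linarith [hsq _ hc.2.1, hsq _ hc.2.2]

theorem norm_lt_of_mem_capBox {r h : ℝ} (hh : 0 < h) (hhr : h ≤ r) {c : EuclideanSpace ℝ (Fin 3)}
    (hc : c ∈ capBox r h) : ‖c‖ < r := by
  have hside := sq_add_sq_lt_of_mem_capBox (by nlinarith) hc
  obtain ⟨hc₀, hc₀'⟩ := hc.1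
  have hsq : ‖c‖ ^ 2 < r ^ 2 := by
    rw [EuclideanSpace.real_norm_sq_eq, Fin.sum_univ_three]
    nlinarith
  exact lt_of_pow_lt_pow_left₀ 2 (by linarith) hsq

theorem norm_single_sub_sq_lt_of_mem_capBox {r h s : ℝ} (hr : 0 ≤ r) (hh : 0 ≤ h) (hs : r ≤ s)
    {c : EuclideanSpace ℝ (Fin 3)} (hc : c ∈ capBox r h) :
    ‖EuclideanSpace.single 0 s - c‖ ^ 2 < (s - r + h) ^ 2 + r * h / 2 := by
  have hside := sq_add_sq_lt_of_mem_capBox (by positivity) hc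
  obtain ⟨hc₀, hc₀'⟩ := hc.1
  rw [EuclideanSpace.real_norm_sq_eq, Fin.sum_univ_three]
  simp only [PiLp.sub_apply, PiLp.single_apply]
  rw [if_pos trivial, if_neg (by decide), if_neg (by decide)]
  nlinarith

theorem le_volume_ball_inter_closedBall {p x : EuclideanSpace ℝ (Fin 3)} {r t : ℝ}
    (hx : r < ‖x - p‖) (ht : 0 < t) (htr : t ≤ r) :
    ENNReal.ofReal (r * ((‖x - p‖ - r) * t / ‖x - p‖) ^ 2 / 2) ≤
      volume (ball p r ∩ closedBall x (‖x - p‖ - r + t)) := by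
  set s := ‖x - p‖
  -- this thickness makes `(s - r + h)² + r h / 2 ≤ (s - r + t)²`
  set h := (s - r) * t / s
  have hr : 0 < r := ht.trans_le htr
  have hs : 0 < s := hr.trans hx
  have hh : 0 < h := div_pos (mul_pos (sub_pos.2 hx) ht) hs
  have hht : h ≤ t := by
    have : h * s = (s - r) * t := div_mul_cancel₀ _ hs.ne'
    nlinarith
  obtain ⟨b, hb⟩ := exists_orthonormalBasis_apply_zero_eq finrank_euclideanSpace_fin
    (u := s⁻¹ • (x - p)) (by rw [norm_smul, norm_inv, norm_norm, inv_mul_cancel₀ hs.ne'])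
  set Φ : EuclideanSpace ℝ (Fin 3) → EuclideanSpace ℝ (Fin 3) := fun y => b.repr (y - p)
  have hΦ : MeasurePreserving Φ := b.measurePreserving_repr.comp (measurePreserving_sub_right _ p)
  have hΦx : Φ x = EuclideanSpace.single 0 s := by
    have : x - p = s • b 0 := by rw [hb, smul_smul, mul_inv_cancel₀ hs.ne', one_smul]
    change b.repr (x - p) = _
    rw [this, map_smul, b.repr_self]
    ext i
    simp [PiLp.single_apply]
  have hsub : Φ ⁻¹' capBox r h ⊆ ball p r ∩ closedBall x (s - r + t) := by
    intro y hy
    constructor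
    · rw [mem_ball, dist_eq_norm, ← b.repr.norm_map]
      exact norm_lt_of_mem_capBox hh (hht.trans htr) hy
    · have hΦxy : ‖Φ x - Φ y‖ = ‖y - x‖ := by
        rw [← map_sub, sub_sub_sub_cancel_right, b.repr.norm_map, norm_sub_rev]
      have hsq := norm_single_sub_sq_lt_of_mem_capBox hr.le hh.le hx.le hy
      rw [← hΦx, hΦxy] at hsq
      rw [mem_closedBall, dist_eq_norm]
      refine le_of_pow_le_pow_left₀ two_ne_zero (by linarith) (hsq.le.trans ?_)
      have : h * s = (s - r) * t := div_mul_cancel₀ _ hs.ne'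
      nlinarith
  calc ENNReal.ofReal (r * h ^ 2 / 2) = volume (capBox r h) := (volume_capBox hr.le hh.le).symm
    _ = volume (Φ ⁻¹' capBox r h) :=
      (hΦ.measure_preimage (measurableSet_capBox r h).nullMeasurableSet).symm
    _ ≤ _ := measure_mono hsub

theorem integrableOn_ball_exp_div_norm_sub {E : Type*} [NormedAddCommGroup E] [MeasurableSpace E]
    [BorelSpace E] [ProperSpace E] {μ : Measure E} [IsFiniteMeasureOnCompacts μ] {p x : E} {r : ℝ}
    (hx : r < ‖x - p‖) (τ : ℝ) :
    IntegrableOn (fun y => exp (-τ * ‖x - y‖) / ‖x - y‖) (ball p r) μ := by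
  refine (ContinuousOn.integrableOn_compact (isCompact_closedBall p r) ?_).mono_set
    ball_subset_closedBall
  refine ContinuousOn.div (by fun_prop) (by fun_prop) fun y hy hxy => ?_
  obtain rfl := norm_sub_eq_zero_iff.1 hxy
  exact hx.not_ge (by rwa [mem_closedBall, dist_eq_norm] at hy)

theorem le_sq_mul_exp_mul_integral_ball {p x : EuclideanSpace ℝ (Fin 3)} {r τ : ℝ} (hr : 0 < r)
    (hx : r < ‖x - p‖) (hτ : r⁻¹ ≤ τ) :
    r * (‖x - p‖ - r) ^ 2 / (2 * exp 1 * ‖x - p‖ ^ 3) ≤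
      τ ^ 2 * exp (τ * (‖x - p‖ - r)) * ∫ y in ball p r, exp (-τ * ‖x - y‖) / ‖x - y‖ := by
  set s := ‖x - p‖
  set f := fun y : EuclideanSpace ℝ (Fin 3) => exp (-τ * ‖x - y‖) / ‖x - y‖
  set L := ball p r ∩ closedBall x (s - r + τ⁻¹)
  have hτ0 : 0 < τ := (inv_pos.2 hr).trans_le hτ
  have htr : τ⁻¹ ≤ r := inv_le_of_inv_le₀ hr hτ
  set κ := exp (-τ * (s - r + τ⁻¹)) / (s - r + τ⁻¹)
  have hfL : ∀ y ∈ L, κ ≤ f y := by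
    rintro y ⟨hyB, hyx⟩
    have hpos : 0 < ‖x - y‖ := norm_pos_iff.2 <| sub_ne_zero.2 fun hxy => by
      rw [mem_ball, dist_eq_norm, ← hxy] at hyB
      exact hx.not_gt hyB
    rw [mem_closedBall, dist_comm, dist_eq_norm] at hyx
    exact div_le_div₀ (exp_nonneg _) (exp_le_exp.2 (by nlinarith)) hpos hyx
  have hint : IntegrableOn f (ball p r) := integrableOn_ball_exp_div_norm_sub hx τ
  have hLfin : volume L ≠ ⊤ := (measure_mono inter_subset_left).trans_lt measure_ball_lt_top |>.ne
  have hIL : κ * (volume L).toReal ≤ ∫ y in L, f y :=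
    setIntegral_ge_of_const_le_real (measurableSet_ball.inter measurableSet_closedBall) hLfin hfL
      (hint.mono_set inter_subset_left)
  have hLB : ∫ y in L, f y ≤ ∫ y in ball p r, f y :=
    setIntegral_mono_set hint (.of_forall fun y => by positivity)
      (.of_forall inter_subset_left)
  have hvolL : r * ((s - r) * τ⁻¹ / s) ^ 2 / 2 ≤ (volume L).toReal :=
    (ENNReal.ofReal_le_iff_le_toReal hLfin).1
      (le_volume_ball_inter_closedBall hx (inv_pos.2 hτ0) htr)
  have hκ : exp (-1) / s ≤ exp (τ * (s - r)) * κ := by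
    rw [← mul_div_assoc, ← exp_add, show τ * (s - r) + -τ * (s - r + τ⁻¹) = -1 by field_simp; ring]
    exact div_le_div_of_nonneg_left (exp_nonneg _) (by positivity) (by linarith)
  calc r * (s - r) ^ 2 / (2 * exp 1 * s ^ 3)
      = τ ^ 2 * (exp (-1) / s) * (r * ((s - r) * τ⁻¹ / s) ^ 2 / 2) := by
        rw [exp_neg]; field_simp
    _ ≤ τ ^ 2 * (exp (τ * (s - r)) * κ) * (volume L).toReal := by gcongr
    _ ≤ τ ^ 2 * exp (τ * (s - r)) * ∫ y in ball p r, f y := by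
        rw [mul_assoc _ (exp _), mul_assoc, mul_assoc]
        gcongr
        exact hIL.trans hLB

theorem volume_potential_lower_bound_general
    (p : EuclideanSpace ℝ (Fin 3)) (r : ℝ) (hr : 0 < r)
    (Γ : Set (EuclideanSpace ℝ (Fin 3))) (hΓc : IsCompact Γ)
    (hdisj : Disjoint Γ (Metric.closedBall p r))
    (v : ℝ → EuclideanSpace ℝ (Fin 3) → ℝ)
    (hv : ∀ τ x, v τ x = (1 / (4 * π)) *
      ∫ y in Metric.ball p r, Real.exp (-τ * ‖x - y‖) / ‖x - y‖) :
    ∃ C₀ > (0 : ℝ), ∃ τ₀ > (0 : ℝ), ∀ τ ≥ τ₀, ∀ x ∈ Γ,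
      C₀ ≤ τ ^ 2 * Real.exp (τ * (‖x - p‖ - r)) * v τ x := by
  have hΓr : ∀ x ∈ Γ, r < ‖x - p‖ := fun x hx => by
    simpa [dist_eq_norm] using disjoint_left.1 hdisj hx
  obtain ⟨a, hra, ha⟩ := hΓc.exists_forall_le' (by fun_prop) hΓr
  obtain ⟨M, hrM, hM⟩ := hΓc.isBounded.subset_closedBall_lt r p
  have hM0 : 0 < M := hr.trans hrM
  have har : 0 < a - r := sub_pos.2 hra
  refine ⟨r * (a - r) ^ 2 / (8 * π * exp 1 * M ^ 3), by positivity, r⁻¹, by positivity,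
    fun τ hτ x hx => ?_⟩
  have hxa := ha x hx
  have hxp : 0 < ‖x - p‖ := hr.trans (hΓr x hx)
  have hxM : ‖x - p‖ ≤ M := by simpa [dist_eq_norm] using hM hx
  calc r * (a - r) ^ 2 / (8 * π * exp 1 * M ^ 3)
      ≤ r * (‖x - p‖ - r) ^ 2 / (8 * π * exp 1 * ‖x - p‖ ^ 3) := by
        gcongr
    _ = 1 / (4 * π) * (r * (‖x - p‖ - r) ^ 2 / (2 * exp 1 * ‖x - p‖ ^ 3)) := by
        field_simp
        ring
    _ ≤ _ := by
        rw [hv, mul_left_comm]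
        gcongr
        exact le_sq_mul_exp_mul_integral_ball hr (hΓr x hx) hτ

/-- uniform lower bound `τ² e^{τ d_e(x,B)} v(x) ≥ C₀` for the volume
potential on a compact part `Γ` of `∂D` disjoint from the closed ball `B(p,r)`. -/
theorem volume_potential_lower_bound
    (D : Set (EuclideanSpace ℝ (Fin 3))) (hD : IsOpen D)
    (p : EuclideanSpace ℝ (Fin 3)) (r : ℝ) (hr : 0 < r)
    (hB : Metric.ball p r ⊆ (closure D)ᶜ)
    (Γ : Set (EuclideanSpace ℝ (Fin 3))) (hΓc : IsCompact Γ)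
    (hΓ : Γ ⊆ frontier D) (hdisj : Disjoint Γ (Metric.closedBall p r))
    (v : ℝ → EuclideanSpace ℝ (Fin 3) → ℝ)
    (hv : ∀ τ x, v τ x = (1 / (4 * π)) *
      ∫ y in Metric.ball p r, Real.exp (-τ * ‖x - y‖) / ‖x - y‖) :
    ∃ C₀ > (0 : ℝ), ∃ τ₀ > (0 : ℝ), ∀ τ ≥ τ₀, ∀ x ∈ Γ,
      C₀ ≤ τ ^ 2 * Real.exp (τ * (‖x - p‖ - r)) * v τ x :=
  volume_potential_lower_bound_general p r hr Γ hΓc hdisj v hv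
end

section
/- Let x, p ∈ ℝ³ with |p - x| > r > 0, τ > 0, and let v(x) = (1/(4π)) ∫_{B(p,r)} e^{-τ|x-y|}/|x-y| dy. Then v(x) ≤ (|p-x| + r)/(4πτ) · ∫_{E_x} (e^{-τ R₋(ω)} - e^{-τ R₊(ω)}) dω, where E_x = {ω ∈ S² : (p-x)·ω > √(|p-x|² - r²)} and R±(ω) = (p-x)·ω ± √(r² - |p-x|² + ((p-x)·ω)²). -/
/-!
In polar coordinates `y = x + ρω` around `x`, the ray in direction `ω` meets `B(p, r)`
exactly for `ρ ∈ (R₋(ω), R₊(ω))`, and for some `ρ > 0` only if `ω ∈ E_x`. The Jacobian `ρ²`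
cancels the singularity of the kernel, leaving `ρ e^{-τρ}`; bounding `ρ ≤ |p - x| + r` on the
ball and integrating `e^{-τρ}` over `(R₋(ω), R₊(ω))` gives the bound.
-/

open MeasureTheory Real Metric Set

noncomputable section

section PolarCoordinates

variable {E F : Type*} [NormedAddCommGroup E] [NormedSpace ℝ E] [FiniteDimensional ℝ E]
  [MeasurableSpace E] [BorelSpace E] [NormedAddCommGroup F] [NormedSpace ℝ F]

theorem integral_volumeIoiPow (n : ℕ) (g : ℝ → F) :
    ∫ ρ, g ρ ∂Measure.volumeIoiPow n = ∫ ρ in Ioi (0 : ℝ), ρ ^ n • g ρ := by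
  simp only [Measure.volumeIoiPow, ENNReal.ofReal]
  rw [integral_withDensity_eq_integral_smul (measurable_subtype_coe.pow_const _).real_toNNReal,
    integral_subtype_comap measurableSet_Ioi fun ρ ↦ (ρ ^ n).toNNReal • g ρ]
  refine setIntegral_congr_fun measurableSet_Ioi fun ρ hρ ↦ ?_
  rw [NNReal.smul_def, Real.coe_toNNReal _ (pow_nonneg hρ.out.le _)]

theorem integral_eq_integral_toSphere_integral_Ioi [Nontrivial E] (μ : Measure E)
    [μ.IsAddHaarMeasure] {f : E → F} (hf : Integrable f μ) :
    ∫ x, f x ∂μ = ∫ ω : sphere (0 : E) 1,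
      (∫ ρ in Ioi (0 : ℝ), ρ ^ (Module.finrank ℝ E - 1) • f (ρ • (ω : E))) ∂μ.toSphere := by
  set G : sphere (0 : E) 1 × Ioi (0 : ℝ) → F := fun q ↦ f ((q.2 : ℝ) • (q.1 : E))
  have hmp := μ.measurePreserving_homeomorphUnitSphereProd
  have hemb := (homeomorphUnitSphereProd E).measurableEmbedding
  have hcompl : MeasurableSet ({0}ᶜ : Set E) := (measurableSet_singleton 0).compl
  have hG : ∀ z, G (homeomorphUnitSphereProd E z) = f z := fun z ↦ by
    simp [G, smul_inv_smul₀ (norm_ne_zero_iff.2 z.2)]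
  have hG_int :
      Integrable G (μ.toSphere.prod (Measure.volumeIoiPow (Module.finrank ℝ E - 1))) := by
    rw [← hmp.integrable_comp_emb hemb, Function.comp_def]
    simp only [hG]
    exact (integrableOn_iff_comap_subtypeVal hcompl).mp hf.integrableOn
  calc ∫ x, f x ∂μ = ∫ z : ({0}ᶜ : Set E), f z ∂μ.comap (↑) := by
        rw [integral_subtype_comap hcompl, restrict_compl_singleton]
    _ = ∫ q, G q ∂μ.toSphere.prod (Measure.volumeIoiPow (Module.finrank ℝ E - 1)) := by
        simp only [← hmp.integral_comp hemb, hG]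
    _ = _ := by
        rw [integral_prod G hG_int]
        exact integral_congr_ae <| .of_forall fun ω ↦
          integral_volumeIoiPow _ fun ρ ↦ f (ρ • (ω : E))

end PolarCoordinates

theorem integral_Ioo_exp_neg_mul {a b τ : ℝ} (hab : a ≤ b) (hτ : τ ≠ 0) :
    ∫ ρ in Ioo a b, exp (-τ * ρ) = (exp (-τ * a) - exp (-τ * b)) / τ := by
  rw [← integral_Ioc_eq_integral_Ioo, ← intervalIntegral.integral_of_le hab,
    intervalIntegral.integral_comp_mul_left (fun ρ ↦ exp ρ) (neg_ne_zero.2 hτ), integral_exp,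
    smul_eq_mul, inv_neg]
  field_simp
  ring

section RayBall

variable {E : Type*} [NormedAddCommGroup E] [InnerProductSpace ℝ E] {c ω : E} {r ρ : ℝ}

def rayEntry (c : E) (r : ℝ) (ω : E) : ℝ :=
  inner ℝ c ω - √(r ^ 2 - ‖c‖ ^ 2 + inner ℝ c ω ^ 2)

def rayExit (c : E) (r : ℝ) (ω : E) : ℝ :=
  inner ℝ c ω + √(r ^ 2 - ‖c‖ ^ 2 + inner ℝ c ω ^ 2)

theorem norm_smul_sub_sq (hω : ‖ω‖ = 1) (ρ : ℝ) (c : E) :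
    ‖ρ • ω - c‖ ^ 2 = ρ ^ 2 - 2 * ρ * inner ℝ c ω + ‖c‖ ^ 2 := by
  rw [norm_sub_sq_real, norm_smul, hω, real_inner_smul_left, real_inner_comm, mul_one,
    Real.norm_eq_abs, sq_abs, mul_assoc]

theorem smul_mem_ball_iff_mem_Ioo (hω : ‖ω‖ = 1) (hr : 0 ≤ r) :
    ρ • ω ∈ ball c r ↔ ρ ∈ Ioo (rayEntry c r ω) (rayExit c r ω) := by
  have hsq : ρ ^ 2 - 2 * ρ * inner ℝ c ω + ‖c‖ ^ 2 < r ^ 2 ↔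
      |ρ - inner ℝ c ω| < √(r ^ 2 - ‖c‖ ^ 2 + inner ℝ c ω ^ 2) := by
    rw [Real.lt_sqrt (abs_nonneg _), sq_abs]
    constructor <;> intro h <;> linarith
  rw [mem_ball, dist_eq_norm, ← pow_lt_pow_iff_left₀ (norm_nonneg _) hr two_ne_zero,
    norm_smul_sub_sq hω, hsq, abs_sub_lt_iff, rayEntry, rayExit, mem_Ioo]
  constructor <;> rintro ⟨h₁, h₂⟩ <;> constructor <;> linarith

theorem sqrt_lt_inner_of_smul_mem_ball (hω : ‖ω‖ = 1) (hrc : r ≤ ‖c‖) (hρ : 0 < ρ)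
    (hmem : ρ • ω ∈ ball c r) : √(‖c‖ ^ 2 - r ^ 2) < inner ℝ c ω := by
  have hr : 0 < r := pos_of_mem_ball hmem
  have hsq : √(‖c‖ ^ 2 - r ^ 2) ^ 2 = ‖c‖ ^ 2 - r ^ 2 := Real.sq_sqrt (by nlinarith)
  rw [mem_ball, dist_eq_norm, ← pow_lt_pow_iff_left₀ (norm_nonneg _) hr.le two_ne_zero,
    norm_smul_sub_sq hω] at hmem
  -- AM-GM: `2ρ√(‖c‖² - r²) ≤ ρ² + ‖c‖² - r² < 2ρ⟪c, ω⟫`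
  nlinarith [sq_nonneg (ρ - √(‖c‖ ^ 2 - r ^ 2))]

end RayBall

theorem setIntegral_ball_comp_sub_right {E F : Type*} [NormedAddCommGroup E] [MeasurableSpace E]
    [BorelSpace E] [NormedAddCommGroup F] [NormedSpace ℝ F] (μ : Measure E)
    [μ.IsAddRightInvariant] (f : E → F) (p x : E) (r : ℝ) :
    ∫ y in ball p r, f (y - x) ∂μ = ∫ z in ball (p - x) r, f z ∂μ := by
  have hpre : (· - x) ⁻¹' ball (p - x) r = ball p r := by
    ext y
    simp [dist_eq_norm]
  rw [← hpre]
  exact (measurePreserving_sub_right μ x).setIntegral_preimage_emb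
    (measurableEmbedding_subRight x) f _

section YukawaKernel

variable {E : Type*}

def yukawaKernel [NormedAddCommGroup E] (τ : ℝ) (z : E) : ℝ :=
  exp (-τ * ‖z‖) / ‖z‖

theorem yukawaKernel_nonneg [NormedAddCommGroup E] (τ : ℝ) (z : E) : 0 ≤ yukawaKernel τ z :=
  div_nonneg (exp_pos _).le (norm_nonneg z)

theorem integrableOn_yukawaKernel_ball [NormedAddCommGroup E] [ProperSpace E] [MeasurableSpace E]
    [OpensMeasurableSpace E] (μ : Measure E) [IsFiniteMeasureOnCompacts μ] {c : E} {r : ℝ}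
    (hrc : r < ‖c‖) (τ : ℝ) : IntegrableOn (yukawaKernel τ) (ball c r) μ := by
  refine ContinuousOn.integrableOn_compact (isCompact_closedBall c r) (fun z hz ↦ ?_)
    |>.mono_set ball_subset_closedBall
  have hz₀ : ‖z‖ ≠ 0 := by
    rintro hz'
    rw [norm_eq_zero.1 hz', mem_closedBall, dist_zero_left] at hz
    exact hz.not_gt hrc
  exact (ContinuousAt.div (by fun_prop) (by fun_prop) hz₀).continuousWithinAt

variable [NormedAddCommGroup E] [InnerProductSpace ℝ E] {c ω : E} {r τ : ℝ}

theorem sq_mul_yukawaKernel_smul (hω : ‖ω‖ = 1) {ρ : ℝ} (hρ : 0 < ρ) (τ : ℝ) :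
    ρ ^ 2 * yukawaKernel τ (ρ • ω) = ρ * exp (-τ * ρ) := by
  rw [yukawaKernel, norm_smul, hω, mul_one, Real.norm_eq_abs, abs_of_pos hρ]
  field_simp

theorem setIntegral_Ioi_yukawaKernel_ball_le (hω : ‖ω‖ = 1) (hr : 0 ≤ r) (hτ : 0 < τ) :
    ∫ ρ in Ioi (0 : ℝ), ρ ^ 2 * (ball c r).indicator (yukawaKernel τ) (ρ • ω)
      ≤ (‖c‖ + r) / τ * (exp (-τ * rayEntry c r ω) - exp (-τ * rayExit c r ω)) := by
  set g : ℝ → ℝ := (Ioo (rayEntry c r ω) (rayExit c r ω)).indicator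
    fun ρ ↦ (‖c‖ + r) * exp (-τ * ρ) with hg
  have hentry_le_exit : rayEntry c r ω ≤ rayExit c r ω := by
    rw [rayEntry, rayExit]
    linarith [Real.sqrt_nonneg (r ^ 2 - ‖c‖ ^ 2 + inner ℝ c ω ^ 2)]
  have hg_nonneg : 0 ≤ g := indicator_nonneg fun ρ _ ↦ by positivity
  have hg_int : Integrable g :=
    ((Continuous.integrableOn_Icc (by fun_prop)).mono_set Ioo_subset_Icc_self)
      |>.integrable_indicator measurableSet_Ioo
  have hle_g : ∀ ρ ∈ Ioi (0 : ℝ),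
      ρ ^ 2 * (ball c r).indicator (yukawaKernel τ) (ρ • ω) ≤ g ρ := by
    intro ρ (hρ : 0 < ρ)
    by_cases hmem : ρ • ω ∈ ball c r
    · have hρ_le : ρ ≤ ‖c‖ + r := by
        simpa [norm_smul, hω, abs_of_pos hρ] using (norm_lt_of_mem_ball hmem).le
      rw [indicator_of_mem hmem, sq_mul_yukawaKernel_smul hω hρ, hg,
        indicator_of_mem ((smul_mem_ball_iff_mem_Ioo hω hr).1 hmem)]
      gcongr
    · rw [indicator_of_notMem hmem, mul_zero]
      exact hg_nonneg ρ
  calc _ ≤ ∫ ρ in Ioi (0 : ℝ), g ρ :=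
        integral_mono_of_nonneg
          (.of_forall fun ρ ↦ mul_nonneg (sq_nonneg ρ)
            (indicator_nonneg (fun z _ ↦ yukawaKernel_nonneg τ z) _))
          hg_int.integrableOn ((ae_restrict_mem measurableSet_Ioi).mono hle_g)
    _ ≤ ∫ ρ, g ρ := setIntegral_le_integral hg_int (.of_forall hg_nonneg)
    _ = (‖c‖ + r) * ∫ ρ in Ioo (rayEntry c r ω) (rayExit c r ω), exp (-τ * ρ) := by
        rw [integral_indicator measurableSet_Ioo, integral_const_mul]
    _ = _ := by
        rw [integral_Ioo_exp_neg_mul hentry_le_exit hτ.ne']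
        ring

theorem setIntegral_Ioi_yukawaKernel_ball_eq_zero (hω : ‖ω‖ = 1) (hrc : r ≤ ‖c‖)
    (hcap : inner ℝ c ω ≤ √(‖c‖ ^ 2 - r ^ 2)) :
    ∫ ρ in Ioi (0 : ℝ), ρ ^ 2 * (ball c r).indicator (yukawaKernel τ) (ρ • ω) = 0 :=
  setIntegral_eq_zero_of_forall_eq_zero fun ρ hρ ↦ by
    have hmem : ρ • ω ∉ ball c r := fun hmem ↦
      (sqrt_lt_inner_of_smul_mem_ball hω hrc hρ hmem).not_ge hcap
    rw [indicator_of_notMem hmem, mul_zero]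

theorem integral_toSphere_yukawaKernel_ball_le [FiniteDimensional ℝ E] [MeasurableSpace E]
    [BorelSpace E] (μ : Measure E) [μ.IsAddHaarMeasure] (hr : 0 ≤ r) (hrc : r ≤ ‖c‖)
    (hτ : 0 < τ) :
    ∫ ω : sphere (0 : E) 1,
        (∫ ρ in Ioi (0 : ℝ), ρ ^ 2 * (ball c r).indicator (yukawaKernel τ) (ρ • (ω : E)))
        ∂μ.toSphere
      ≤ (‖c‖ + r) / τ *
        ∫ ω in {ω : sphere (0 : E) 1 | √(‖c‖ ^ 2 - r ^ 2) < inner ℝ c (ω : E)},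
          (exp (-τ * rayEntry c r ω) - exp (-τ * rayExit c r ω)) ∂μ.toSphere := by
  set S := {ω : sphere (0 : E) 1 | √(‖c‖ ^ 2 - r ^ 2) < inner ℝ c (ω : E)}
  have hS : MeasurableSet S := (isOpen_lt continuous_const (by fun_prop)).measurableSet
  have hcont : Continuous fun ω : sphere (0 : E) 1 ↦
      (‖c‖ + r) / τ * (exp (-τ * rayEntry c r ω) - exp (-τ * rayExit c r ω)) := by
    unfold rayEntry rayExit
    fun_prop
  rw [← integral_const_mul, ← integral_indicator hS]
  refine integral_mono_of_nonneg
    (.of_forall fun ω ↦ setIntegral_nonneg measurableSet_Ioi fun ρ _ ↦ mul_nonneg (sq_nonneg ρ)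
      (indicator_nonneg (fun z _ ↦ yukawaKernel_nonneg τ z) _))
    ((hcont.integrable_of_hasCompactSupport (.of_compactSpace _)).indicator hS)
    (.of_forall fun ω ↦ ?_)
  have hω : ‖(ω : E)‖ = 1 := norm_eq_of_mem_sphere ω
  by_cases hωS : ω ∈ S
  · rw [indicator_of_mem hωS]
    exact setIntegral_Ioi_yukawaKernel_ball_le hω hr hτ
  · rw [indicator_of_notMem hωS]
    exact (setIntegral_Ioi_yukawaKernel_ball_eq_zero hω hrc (not_lt.1 hωS)).le

end YukawaKernel

/-- upper bound for the volume potential `v(x)` of the ball `B(p,r)` by the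
solid-angle integral `((|p-x|+r)/(4πτ)) ∫_{E_x} (e^{-τR₋(ω)} - e^{-τR₊(ω)}) dω`. -/
theorem volume_potential_upper_bound
    (p x : EuclideanSpace ℝ (Fin 3)) (r τ : ℝ) (hr : 0 < r) (h : r < ‖p - x‖)
    (hτ : 0 < τ)
    (Rm Rp : EuclideanSpace ℝ (Fin 3) → ℝ)
    (hRm : ∀ ω, Rm ω = (inner ℝ (p - x) ω : ℝ) -
      Real.sqrt (r ^ 2 - ‖p - x‖ ^ 2 + (inner ℝ (p - x) ω : ℝ) ^ 2))
    (hRp : ∀ ω, Rp ω = (inner ℝ (p - x) ω : ℝ) +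
      Real.sqrt (r ^ 2 - ‖p - x‖ ^ 2 + (inner ℝ (p - x) ω : ℝ) ^ 2)) :
    (1 / (4 * π)) * (∫ y in Metric.ball p r, Real.exp (-τ * ‖x - y‖) / ‖x - y‖)
      ≤ (‖p - x‖ + r) / (4 * π * τ) *
        ∫ ω in {ω : sphere (0 : EuclideanSpace ℝ (Fin 3)) 1 |
            (inner ℝ (p - x) (ω : EuclideanSpace ℝ (Fin 3)) : ℝ) >
              Real.sqrt (‖p - x‖ ^ 2 - r ^ 2)},
          (Real.exp (-τ * Rm (ω : EuclideanSpace ℝ (Fin 3)))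
            - Real.exp (-τ * Rp (ω : EuclideanSpace ℝ (Fin 3))))
          ∂((volume : Measure (EuclideanSpace ℝ (Fin 3))).toSphere) := by
  obtain rfl : Rm = rayEntry (p - x) r := funext hRm
  obtain rfl : Rp = rayExit (p - x) r := funext hRp
  have hshift : ∫ y in ball p r, exp (-τ * ‖x - y‖) / ‖x - y‖
      = ∫ z, (ball (p - x) r).indicator (yukawaKernel τ) z := by
    rw [integral_indicator measurableSet_ball, ← setIntegral_ball_comp_sub_right]
    simp only [yukawaKernel, norm_sub_rev x]
  have hpolar := integral_eq_integral_toSphere_integral_Ioi volume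
    ((integrableOn_yukawaKernel_ball volume h τ).integrable_indicator measurableSet_ball)
  rw [finrank_euclideanSpace_fin] at hpolar
  simp only [smul_eq_mul] at hpolar
  rw [hshift, hpolar]
  calc _ ≤ 1 / (4 * π) * ((‖p - x‖ + r) / τ * _) := by
        gcongr
        exact integral_toSphere_yukawaKernel_ball_le volume hr.le h.le hτ
    _ = _ := by ring
end
end

section
/- Let d > 0, T₀ > d, δ > 0, and let I : (0,∞) → ℝ be a function satisfying liminf_{τ→∞} τ^{δ+1} e^{τd} I(τ) > 0 and limsup_{τ→∞} τ^{1/2} e^{τd} |I(τ)| < ∞. Then lim_{τ→∞} τ^{-1} log I(τ) = -d, and lim_{τ→∞} e^{τ T₀} I(τ) = +∞. -/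
open Filter Real

/-! Both hypotheses say that `I τ` is squeezed between envelopes of the form
`c / (τ ^ s * exp (τ * d))` with `c > 0`. Taking logarithms, `τ⁻¹ log` of every such envelope
tends to `-d`, since the polynomial factor only contributes `s log τ / τ → 0`; and multiplying
the lower envelope by `exp (τ * T₀)` leaves `c exp ((T₀ - d) τ) / τ ^ s`, in which the exponential
wins. -/

theorem Real.exists_pos_eventually_le_of_pos_liminf {α : Type*} {l : Filter α} {u : α → ℝ}
    (h : 0 < liminf u l) : ∃ c > 0, ∀ᶠ x in l, c ≤ u x := by
  -- without a lower bound the liminf of a real function is the junk value `sSup ∅ = 0`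
  have hbdd : IsBoundedUnder (· ≥ ·) l u := by
    by_contra hu
    exact h.ne' (Real.liminf_of_not_isBoundedUnder hu)
  exact ⟨liminf u l / 2, half_pos h,
    (eventually_lt_of_lt_liminf (half_lt_self h) hbdd).mono fun _ hx => hx.le⟩

theorem Filter.IsBoundedUnder.exists_pos_eventually_le {α : Type*} {l : Filter α} {u : α → ℝ}
    (h : IsBoundedUnder (· ≤ ·) l u) : ∃ C > 0, ∀ᶠ x in l, u x ≤ C := by
  obtain ⟨C, hC⟩ := h
  exact ⟨max C 1, by positivity, (eventually_map.1 hC).mono fun _ hx => hx.trans (le_max_left _ _)⟩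

theorem tendsto_inv_mul_log_div_rpow_mul_exp {c : ℝ} (hc : 0 < c) (s d : ℝ) :
    Tendsto (fun τ => τ⁻¹ * log (c / (τ ^ s * exp (τ * d)))) atTop (nhds (-d)) := by
  have hlog : Tendsto (fun τ => log τ / τ) atTop (nhds 0) :=
    isLittleO_log_id_atTop.tendsto_div_nhds_zero
  have hlim : Tendsto (fun τ => τ⁻¹ * log c - s * (log τ / τ) - d) atTop (nhds (-d)) := by
    simpa using ((tendsto_inv_atTop_zero.mul_const (log c)).sub (hlog.const_mul s)).sub_const d
  refine hlim.congr' ?_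
  filter_upwards [eventually_gt_atTop 0] with τ hτ
  rw [log_div hc.ne' (by positivity), log_mul (by positivity) (exp_ne_zero _), log_rpow hτ,
    log_exp]
  field_simp
  ring

theorem tendsto_inv_mul_log_of_le_of_le {f g I : ℝ → ℝ} {L : ℝ}
    (hf : Tendsto (fun τ => τ⁻¹ * log (f τ)) atTop (nhds L))
    (hg : Tendsto (fun τ => τ⁻¹ * log (g τ)) atTop (nhds L))
    (hf_pos : ∀ᶠ τ in atTop, 0 < f τ) (hfI : ∀ᶠ τ in atTop, f τ ≤ I τ)
    (hIg : ∀ᶠ τ in atTop, I τ ≤ g τ) :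
    Tendsto (fun τ => τ⁻¹ * log (I τ)) atTop (nhds L) := by
  refine tendsto_of_tendsto_of_tendsto_of_le_of_le' hf hg ?_ ?_
  · filter_upwards [hf_pos, hfI, eventually_ge_atTop 0] with τ h0 h1 hτ
    gcongr
  · filter_upwards [hf_pos, hfI, hIg, eventually_ge_atTop 0] with τ h0 h1 h2 hτ
    exact mul_le_mul_of_nonneg_left (log_le_log (h0.trans_le h1) h2) (inv_nonneg.2 hτ)

theorem tendsto_exp_mul_mul_div_rpow_mul_exp {c d T : ℝ} (hc : 0 < c) (s : ℝ) (hdT : d < T) :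
    Tendsto (fun τ => exp (τ * T) * (c / (τ ^ s * exp (τ * d)))) atTop atTop := by
  refine ((tendsto_exp_mul_div_rpow_atTop s (T - d) (sub_pos.2 hdT)).const_mul_atTop hc).congr
    fun τ => ?_
  rw [sub_mul, exp_sub, mul_comm T τ, mul_comm d τ]
  field_simp

theorem enclosure_asymptotics_general
    (d T₀ δ : ℝ) (hT₀ : d < T₀)
    (I : ℝ → ℝ)
    (hlow : 0 < Filter.liminf
      (fun τ : ℝ => τ ^ (δ + 1) * Real.exp (τ * d) * I τ) Filter.atTop)
    (hupp : Filter.IsBoundedUnder (· ≤ ·) Filter.atTop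
      (fun τ : ℝ => τ ^ ((1 : ℝ) / 2) * Real.exp (τ * d) * |I τ|)) :
    Filter.Tendsto (fun τ : ℝ => τ⁻¹ * Real.log (I τ)) Filter.atTop (nhds (-d)) ∧
    Filter.Tendsto (fun τ : ℝ => Real.exp (τ * T₀) * I τ) Filter.atTop Filter.atTop := by
  obtain ⟨c, hc, hlow⟩ := Real.exists_pos_eventually_le_of_pos_liminf hlow
  obtain ⟨C, hC, hupp⟩ := hupp.exists_pos_eventually_le
  have hI_ge : ∀ᶠ τ in atTop, c / (τ ^ (δ + 1) * exp (τ * d)) ≤ I τ := by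
    filter_upwards [hlow, eventually_gt_atTop 0] with τ h hτ
    exact (div_le_iff₀' (by positivity)).2 h
  have hI_le : ∀ᶠ τ in atTop, I τ ≤ C / (τ ^ ((1 : ℝ) / 2) * exp (τ * d)) := by
    filter_upwards [hupp, eventually_gt_atTop 0] with τ h hτ
    exact (le_abs_self _).trans ((le_div_iff₀' (by positivity)).2 h)
  have hlow_pos : ∀ᶠ τ in atTop, 0 < c / (τ ^ (δ + 1) * exp (τ * d)) := by
    filter_upwards [eventually_gt_atTop 0] with τ hτ
    positivity
  refine ⟨tendsto_inv_mul_log_of_le_of_le (tendsto_inv_mul_log_div_rpow_mul_exp hc _ d)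
    (tendsto_inv_mul_log_div_rpow_mul_exp hC _ d) hlow_pos hI_ge hI_le, ?_⟩
  refine tendsto_atTop_mono' atTop ?_ (tendsto_exp_mul_mul_div_rpow_mul_exp hc (δ + 1) hT₀)
  filter_upwards [hI_ge] with τ h
  gcongr

/-- abstract asymptotic lemma for the enclosure method: two-sided
polynomial-times-exponential bounds on an indicator function `I(τ)` give
`τ⁻¹ log I(τ) → -d` and `e^{τT₀} I(τ) → ∞` for `T₀ > d`. -/
theorem enclosure_asymptotics
    (d T₀ δ : ℝ) (hd : 0 < d) (hT₀ : d < T₀) (hδ : 0 < δ)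
    (I : ℝ → ℝ)
    (hlow : 0 < Filter.liminf
      (fun τ : ℝ => τ ^ (δ + 1) * Real.exp (τ * d) * I τ) Filter.atTop)
    (hupp : Filter.IsBoundedUnder (· ≤ ·) Filter.atTop
      (fun τ : ℝ => τ ^ ((1 : ℝ) / 2) * Real.exp (τ * d) * |I τ|)) :
    Filter.Tendsto (fun τ : ℝ => τ⁻¹ * Real.log (I τ)) Filter.atTop (nhds (-d)) ∧
    Filter.Tendsto (fun τ : ℝ => Real.exp (τ * T₀) * I τ) Filter.atTop Filter.atTop :=
  enclosure_asymptotics_general d T₀ δ hT₀ I hlow hupp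
end
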